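/- Let P and P' be non-crossing partitions of the cyclically ordered set {1, …, k}, and suppose R is a least upper bound of P and P' in the poset of non-crossing partitions of {1, …, k} ordered by refinement. Then the Kreweras complement R^c is a greatest lower bound of P^c and P'^c in this poset, and it equals the common refinement of P^c and P'^c; in other words, (P ∨ P')^c = P^c ∧ P'^c. -/
import Mathlib

/-!
STATEMENT 9: Let P and P' be non-crossing partitions of the cyclically ordered set
{1, …, k} and let R be a least upper bound of P and P' in the poset of non-crossing
partitions ordered by refinement. Then the Kreweras complement R^c is a greatest lower
bound of P^c and P'^c in this poset, and equals the common refinement of P^c and P'^c;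
i.e. (P ∨ P')^c = P^c ∧ P'^c.

Partitions of {1, …, k} are modelled as setoids on `Fin k`; the refinement order is
implication of the corresponding equivalence relations.
-/

/-- Four points of `Fin n` (viewed on a circle with its natural cyclic order) are in
(strict, anticlockwise) cyclic order. -/
def Cyc4 {n : ℕ} (a b c d : Fin n) : Prop :=
  (a < b ∧ b < c ∧ c < d) ∨ (b < c ∧ c < d ∧ d < a) ∨
  (c < d ∧ d < a ∧ a < b) ∨ (d < a ∧ a < b ∧ b < c)

/-- A partition (setoid) of `Fin n` is non-crossing if there are no elements
`i1, j1, i2, j2` in cyclic order with `i1, i2` in one block and `j1, j2` in a different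
block. -/
def IsNoncrossing {n : ℕ} (P : Setoid (Fin n)) : Prop :=
  ∀ i1 j1 i2 j2 : Fin n, Cyc4 i1 j1 i2 j2 → P.r i1 i2 → P.r j1 j2 → P.r i1 j1

/-- The embedding of the original k points into the interleaved 2k points:
`i ↦ 2i` (cyclic order `1 < 1° < 2 < 2° < ⋯ < k < k° < 1`). -/
def emb {k : ℕ} (i : Fin k) : Fin (2 * k) := ⟨2 * i.1, by have := i.2; omega⟩

/-- The dual point `i°` of `i`, placed between `i` and `i + 1`: `i ↦ 2i + 1`. -/
def dual {k : ℕ} (i : Fin k) : Fin (2 * k) := ⟨2 * i.1 + 1, by have := i.2; omega⟩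

/-- The Kreweras complement of a partition `P` of `Fin k`, as a relation on `Fin k`
(identifying `i°` with `i`): `i°` and `j°` lie in a common block if and only if no block
of `P` contains elements `b1, b2` with `i°, b1, j°, b2` in cyclic order. -/
def Krew {k : ℕ} (P : Setoid (Fin k)) (i j : Fin k) : Prop :=
  ∀ b1 b2 : Fin k, P.r b1 b2 → ¬ Cyc4 (dual i) (emb b1) (dual j) (emb b2)

/-- `a` lies strictly between the chord endpoints `i°`, `j°` in the linear order,
i.e. on one of the two sides of the chord `i°j°`. -/
def Bet {k : ℕ} (i j a : Fin k) : Prop :=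
  min (2 * i.1 + 1) (2 * j.1 + 1) < 2 * a.1 ∧ 2 * a.1 < max (2 * i.1 + 1) (2 * j.1 + 1)

lemma cyc4_aa {n : ℕ} (a b d : Fin n) : ¬ Cyc4 a b a d := by
  simp only [Cyc4, Fin.lt_def]; omega

lemma cyc4_rot {n : ℕ} {a b c d : Fin n} (h : Cyc4 a b c d) : Cyc4 c d a b := by
  unfold Cyc4 at *; tauto

/-- Key lemma for transitivity of the Kreweras complement relation. -/
lemma keyT {k : ℕ} (i j l a b : Fin k) :
    Cyc4 (dual i) (emb a) (dual l) (emb b) →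
    Cyc4 (dual i) (emb a) (dual j) (emb b) ∨ Cyc4 (dual j) (emb a) (dual l) (emb b) := by
  have hj := j.2
  simp only [Cyc4, dual, emb, Fin.lt_def]
  intro h
  rcases h with ⟨h1,h2,h3⟩|⟨h1,h2,h3⟩|⟨h1,h2,h3⟩|⟨h1,h2,h3⟩ <;> omega

/-- Key lemma for noncrossingness of the Kreweras complement. -/
lemma keyN {k : ℕ} (i1 j1 i2 j2 a b : Fin k) (hc : Cyc4 i1 j1 i2 j2)
    (h : Cyc4 (dual i1) (emb a) (dual j1) (emb b)) :
    Cyc4 (dual i1) (emb a) (dual i2) (emb b) ∨ Cyc4 (dual j1) (emb b) (dual j2) (emb a) := by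
  simp only [Cyc4, dual, emb, Fin.lt_def] at *
  rcases hc with ⟨h1,h2,h3⟩|⟨h1,h2,h3⟩|⟨h1,h2,h3⟩|⟨h1,h2,h3⟩ <;>
    rcases h with ⟨g1,g2,g3⟩|⟨g1,g2,g3⟩|⟨g1,g2,g3⟩|⟨g1,g2,g3⟩ <;> omega

/-- Two points `a, b` are not separated (in either cyclic order) by the chord `i°j°`
iff they lie on the same side of it. -/
lemma sameSide_iff {k : ℕ} (i j a b : Fin k) :
    (¬ Cyc4 (dual i) (emb a) (dual j) (emb b) ∧ ¬ Cyc4 (dual i) (emb b) (dual j) (emb a)) ↔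
    (Bet i j a ↔ Bet i j b) := by
  simp only [Cyc4, dual, emb, Fin.lt_def, Bet]
  constructor
  · intro ⟨h1, h2⟩; omega
  · intro h
    constructor <;> intro hc <;>
      rcases hc with ⟨g1,g2,g3⟩|⟨g1,g2,g3⟩|⟨g1,g2,g3⟩|⟨g1,g2,g3⟩ <;> omega

/-- If `a, b, c, d` are in cyclic order with `a, c` on a common side of the chord `i°j°`
and `b, d` on a common side, then all four are on one side. -/
lemma key2' {k : ℕ} (i j a b c d : Fin k) (hc : Cyc4 a b c d)
    (h1 : Bet i j a ↔ Bet i j c) (h2 : Bet i j b ↔ Bet i j d) :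
    Bet i j a ↔ Bet i j b := by
  simp only [Cyc4, Fin.lt_def, Bet] at *
  rcases hc with ⟨g1,g2,g3⟩|⟨g1,g2,g3⟩|⟨g1,g2,g3⟩|⟨g1,g2,g3⟩ <;> omega

theorem kreweras_of_join_eq_meet_of_kreweras
    {k : ℕ} (hk : 0 < k) (P P' R : Setoid (Fin k))
    (hP : IsNoncrossing P) (hP' : IsNoncrossing P') (hR : IsNoncrossing R)
    -- R is an upper bound of P and P' in the poset of non-crossing partitions
    (hPR : ∀ i j : Fin k, P.r i j → R.r i j)
    (hP'R : ∀ i j : Fin k, P'.r i j → R.r i j)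
    -- R is a least upper bound
    (hleast : ∀ S : Setoid (Fin k), IsNoncrossing S →
      (∀ i j : Fin k, P.r i j → S.r i j) → (∀ i j : Fin k, P'.r i j → S.r i j) →
      ∀ i j : Fin k, R.r i j → S.r i j) :
    -- R^c is a non-crossing partition …
    (∃ Rc : Setoid (Fin k), IsNoncrossing Rc ∧ ∀ i j : Fin k, Rc.r i j ↔ Krew R i j) ∧
    -- … which equals the common refinement of P^c and P'^c …
    (∀ i j : Fin k, Krew R i j ↔ (Krew P i j ∧ Krew P' i j)) ∧
    -- … is a lower bound of P^c and P'^c …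
    (∀ i j : Fin k, Krew R i j → Krew P i j) ∧
    (∀ i j : Fin k, Krew R i j → Krew P' i j) ∧
    -- … and is the greatest such in the poset of non-crossing partitions.
    (∀ S : Setoid (Fin k), IsNoncrossing S →
      (∀ i j : Fin k, S.r i j → Krew P i j) → (∀ i j : Fin k, S.r i j → Krew P' i j) →
      ∀ i j : Fin k, S.r i j → Krew R i j) := by
  -- Monotonicity: refining the partition coarsens the Kreweras complement.
  have hKP : ∀ i j : Fin k, Krew R i j → Krew P i j :=
    fun i j hK b1 b2 hab => hK b1 b2 (hPR _ _ hab)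
  have hKP' : ∀ i j : Fin k, Krew R i j → Krew P' i j :=
    fun i j hK b1 b2 hab => hK b1 b2 (hP'R _ _ hab)
  -- The hard direction: Krew P ∧ Krew P' ≤ Krew R, via the least upper bound property.
  have hmeet : ∀ i j : Fin k, Krew P i j → Krew P' i j → Krew R i j := by
    intro i j hp hp' b1 b2 hr
    -- split R along the chord i°j°
    let S : Setoid (Fin k) :=
      ⟨fun a b => R.r a b ∧ (Bet i j a ↔ Bet i j b),
        ⟨fun a => ⟨R.iseqv.refl a, Iff.rfl⟩,
         fun h => ⟨R.iseqv.symm h.1, h.2.symm⟩,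
         fun h h' => ⟨R.iseqv.trans h.1 h'.1, h.2.trans h'.2⟩⟩⟩
    have hSnc : IsNoncrossing S := by
      intro i1 j1 i2 j2 hc h1 h2
      exact ⟨hR _ _ _ _ hc h1.1 h2.1, key2' i j i1 j1 i2 j2 hc h1.2 h2.2⟩
    have hPS : ∀ a b : Fin k, P.r a b → S.r a b := fun a b hab =>
      ⟨hPR a b hab, (sameSide_iff i j a b).mp ⟨hp a b hab, hp b a (P.iseqv.symm hab)⟩⟩
    have hP'S : ∀ a b : Fin k, P'.r a b → S.r a b := fun a b hab =>
      ⟨hP'R a b hab, (sameSide_iff i j a b).mp ⟨hp' a b hab, hp' b a (P'.iseqv.symm hab)⟩⟩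
    have hS : S.r b1 b2 := hleast S hSnc hPS hP'S b1 b2 hr
    exact ((sameSide_iff i j b1 b2).mpr hS.2).1
  refine ⟨?_, fun i j => ⟨fun h => ⟨hKP i j h, hKP' i j h⟩, fun h => hmeet i j h.1 h.2⟩,
    hKP, hKP',
    fun S _ hSP hSP' i j hs => hmeet i j (hSP i j hs) (hSP' i j hs)⟩
  -- Krew R is itself a noncrossing partition.
  refine ⟨⟨Krew R,
      ⟨fun i b1 b2 _ hc => cyc4_aa _ _ _ hc,
       fun {i j} hij b1 b2 hrr hc => hij b2 b1 (R.iseqv.symm hrr) (cyc4_rot hc),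
       fun {i j l} hij hjl b1 b2 hrr hc =>
         (keyT i j l b1 b2 hc).elim (hij b1 b2 hrr) (hjl b1 b2 hrr)⟩⟩,
    ?_, fun i j => Iff.rfl⟩
  intro i1 j1 i2 j2 hc h1 h2 b1 b2 hrr hcyc
  rcases keyN i1 j1 i2 j2 b1 b2 hc hcyc with h | h
  · exact h1 b1 b2 hrr h
  · exact h2 b2 b1 (R.iseqv.symm hrr) h
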